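/- arXiv:1010.2464 — 3 statements merged into one kernel-verified Lean document; each statement's English description precedes it below -/
import Mathlib

section
/- For every graph G of order n, Γ_d(G) ≥ n/χ(G), where χ(G) is the chromatic number. -/
/-- An orientation of a simple graph `G`: each edge gets exactly one direction. -/
def IsOrientation {V : Type*} (G : SimpleGraph V) (o : V → V → Prop) : Prop :=
  (∀ u v, o u v → G.Adj u v) ∧
  (∀ u v, G.Adj u v → (o u v ∨ o v u)) ∧
  (∀ u v, o u v → ¬ o v u)

/-- A directed dominating set: every vertex outside `S` has an in-neighbor in `S`. -/
def IsDirDomSet {V : Type*} (o : V → V → Prop) (S : Set V) : Prop :=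
  ∀ v, v ∉ S → ∃ u ∈ S, o u v

/-- The directed domination number of a digraph (orientation). -/
noncomputable def dirDomNum (V : Type*) [Fintype V] (o : V → V → Prop) : ℕ :=
  sInf {n | ∃ S : Finset V, S.card = n ∧ IsDirDomSet o ↑S}

/-- The (upper) directed domination number of a graph: the maximum of `dirDomNum`
over all orientations. -/
noncomputable def GammaD {V : Type*} [Fintype V] (G : SimpleGraph V) : ℕ :=
  sSup {n | ∃ o, IsOrientation G o ∧ dirDomNum V o = n}

/-- The independence number of a graph. -/
noncomputable def indepNum {V : Type*} [Fintype V] (G : SimpleGraph V) : ℕ :=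
  sSup {n | ∃ S : Finset V, S.card = n ∧ ∀ u ∈ S, ∀ w ∈ S, u ≠ w → ¬ G.Adj u w}

lemma dirDomNum_le_card {V : Type*} [Fintype V] (o : V → V → Prop) :
    dirDomNum V o ≤ Fintype.card V := by
  apply Nat.sInf_le
  exact ⟨Finset.univ, rfl, fun v hv => absurd (Finset.mem_coe.mpr (Finset.mem_univ v)) hv⟩

lemma indep_le_gammaD {V : Type*} [Fintype V] (G : SimpleGraph V) (I : Finset V)
    (hI : ∀ u ∈ I, ∀ w ∈ I, ¬ G.Adj u w) : I.card ≤ GammaD G := by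
  classical
  set o : V → V → Prop := fun u v => G.Adj u v ∧ (u ∈ I ∨ (u ∉ I ∧ v ∉ I ∧ WellOrderingRel u v))
    with ho
  have horient : IsOrientation G o := by
    refine ⟨fun u v h => h.1, ?_, ?_⟩
    · intro u v hadj
      by_cases hu : u ∈ I
      · exact Or.inl ⟨hadj, Or.inl hu⟩
      by_cases hv : v ∈ I
      · exact Or.inr ⟨hadj.symm, Or.inl hv⟩
      rcases trichotomous_of WellOrderingRel u v with h | h | h
      · exact Or.inl ⟨hadj, Or.inr ⟨hu, hv, h⟩⟩
      · exact absurd h hadj.ne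
      · exact Or.inr ⟨hadj.symm, Or.inr ⟨hv, hu, h⟩⟩
    · rintro u v ⟨hadj, huv⟩ ⟨hadj', hvu⟩
      rcases huv with hu | ⟨hu, hv, h1⟩
      · rcases hvu with hv | ⟨hv, hu', h2⟩
        · exact hI u hu v hv hadj
        · exact hu' hu
      · rcases hvu with hv' | ⟨hv', hu', h2⟩
        · exact hv hv'
        · exact (asymm_of WellOrderingRel h1) h2
  have hdom : I.card ≤ dirDomNum V o := by
    apply le_csInf
    · exact ⟨Fintype.card V, Finset.univ, rfl,
        fun v hv => absurd (Finset.mem_coe.mpr (Finset.mem_univ v)) hv⟩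
    · rintro n ⟨S, rfl, hS⟩
      apply Finset.card_le_card
      intro v hv
      by_contra hvs
      obtain ⟨u, hu, hadj, hcase⟩ := hS v hvs
      rcases hcase with h | ⟨_, hv', _⟩
      · exact hI u h v hv hadj
      · exact hv' hv
  refine hdom.trans (le_csSup ?_ ⟨o, horient, rfl⟩)
  exact ⟨Fintype.card V, by rintro n ⟨o', _, rfl⟩; exact dirDomNum_le_card o'⟩

theorem stmt4 {V : Type*} [Fintype V] (G : SimpleGraph V) :
    Fintype.card V ≤ G.chromaticNumber.toNat * GammaD G := by
  classical
  set k := G.chromaticNumber.toNat with hk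
  obtain ⟨C⟩ := G.colorable_chromaticNumber_of_fintype
  -- fibers of C partition V
  have hcard : Fintype.card V =
      ∑ i : Fin k, (Finset.univ.filter fun v => C v = i).card := by
    rw [← Finset.card_univ]
    exact Finset.card_eq_sum_card_fiberwise (fun v _ => Finset.mem_univ (C v))
  have hbound : ∀ i : Fin k,
      (Finset.univ.filter fun v => C v = i).card ≤ GammaD G := by
    intro i
    apply indep_le_gammaD
    intro u hu w hw hadj
    simp only [Finset.mem_filter] at hu hw
    exact C.valid hadj (hu.2.trans hw.2.symm)
  calc Fintype.card V = ∑ i : Fin k, (Finset.univ.filter fun v => C v = i).card := hcard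
    _ ≤ ∑ _i : Fin k, GammaD G := Finset.sum_le_sum fun i _ => hbound i
    _ = k * GammaD G := by simp [Finset.sum_const, Fintype.card_fin, mul_comm]
end

section
/- For every graph G, Γ_d(G) ≤ α(G) · ⌈χ(G)/2⌉, where α(G) is the independence number and χ(G) the chromatic number. -/
/-- Kernel lemma: given two independent sets `A`, `B` and an orientation `o` of `G`,
there is a set `S ⊆ A ∪ B`, independent in `G`, dominating `A ∪ B`. -/
lemma kernel_pair {V : Type*} {G : SimpleGraph V} {o : V → V → Prop}
    (ho : IsOrientation G o) (A B : Set V)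
    (hA : ∀ u ∈ A, ∀ w ∈ A, ¬ G.Adj u w) (hB : ∀ u ∈ B, ∀ w ∈ B, ¬ G.Adj u w) :
    ∃ S : Set V, S ⊆ A ∪ B ∧ (∀ u ∈ S, ∀ w ∈ S, ¬ G.Adj u w) ∧
      (∀ v ∈ A ∪ B, v ∉ S → ∃ u ∈ S, o u v) := by
  obtain ⟨ho1, ho2, ho3⟩ := ho
  -- out-neighborhood
  let N : Set V → Set V := fun X => {v | ∃ x ∈ X, o x v}
  have hN : Monotone N := by
    intro X X' h v hv
    obtain ⟨x, hx, hxo⟩ := hv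
    exact ⟨x, h hx, hxo⟩
  let F : Set V →o Set V :=
    ⟨fun X => A \ N (B \ N X), by
      intro X X' h
      exact Set.diff_subset_diff_right (hN (Set.diff_subset_diff_right (hN h)))⟩
  set X : Set V := F.lfp with hXdef
  have hfix : A \ N (B \ N X) = X := F.map_lfp
  set Y : Set V := B \ N X with hYdef
  have hXeq : X = A \ N Y := by rw [← hfix]
  refine ⟨X ∪ Y, ?_, ?_, ?_⟩
  · intro v hv
    rcases hv with hv | hv
    · exact Or.inl (hXeq ▸ hv).1
    · exact Or.inr hv.1
  · -- independence
    intro u hu w hw hadj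
    have key : ∀ a ∈ X, ∀ b ∈ Y, ¬ G.Adj a b := by
      intro a ha b hb hab
      rcases ho2 _ _ hab with h | h
      · exact hb.2 ⟨a, ha, h⟩
      · exact (hXeq ▸ ha).2 ⟨b, hb, h⟩
    rcases hu with hu | hu <;> rcases hw with hw | hw
    · exact hA u (hXeq ▸ hu).1 w (hXeq ▸ hw).1 hadj
    · exact key u hu w hw hadj
    · exact key w hw u hu hadj.symm
    · exact hB u hu.1 w hw.1 hadj
  · -- domination
    intro v hv hvS
    rcases hv with hvA | hvB
    · have : v ∈ N Y := by
        by_contra h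
        exact hvS (Or.inl (hXeq ▸ (⟨hvA, h⟩ : v ∈ A \ N Y)))
      obtain ⟨u, hu, huo⟩ := this
      exact ⟨u, Or.inr hu, huo⟩
    · have : v ∈ N X := by
        by_contra h
        exact hvS (Or.inr ⟨hvB, h⟩)
      obtain ⟨u, hu, huo⟩ := this
      exact ⟨u, Or.inl hu, huo⟩

lemma indep_card_le {V : Type*} [Fintype V] (G : SimpleGraph V) (S : Finset V)
    (h : ∀ u ∈ S, ∀ w ∈ S, u ≠ w → ¬ G.Adj u w) : S.card ≤ indepNum G := by
  apply le_csSup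
  · refine ⟨Fintype.card V, ?_⟩
    rintro n ⟨T, hT, -⟩
    exact hT ▸ T.card_le_univ
  · exact ⟨S, rfl, h⟩

/-- Every orientation admits a small dominating set. -/
lemma key_bound {V : Type*} [Fintype V] (G : SimpleGraph V) {o : V → V → Prop}
    (ho : IsOrientation G o) :
    dirDomNum V o ≤ indepNum G * ((G.chromaticNumber.toNat + 1) / 2) := by
  classical
  set k := G.chromaticNumber.toNat with hk
  obtain ⟨C⟩ := G.colorable_chromaticNumber_of_fintype
  set m := (k + 1) / 2 with hm
  -- for each i < m, get the kernel set for the pair of color classes 2i, 2i+1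
  have hclass : ∀ c : ℕ, ∀ u ∈ {v : V | (C v : ℕ) = c}, ∀ w ∈ {v : V | (C v : ℕ) = c},
      ¬ G.Adj u w := by
    intro c u hu w hw hadj
    exact C.valid hadj (Fin.val_injective.eq_iff.mp (hu.trans hw.symm))
  have hS : ∀ i : ℕ, ∃ S : Set V,
      (∀ u ∈ S, ∀ w ∈ S, ¬ G.Adj u w) ∧
      (∀ v, ((C v : ℕ) = 2 * i ∨ (C v : ℕ) = 2 * i + 1) → v ∉ S → ∃ u ∈ S, o u v) := by
    intro i
    obtain ⟨S, -, hind, hdom⟩ := kernel_pair ho {v : V | (C v : ℕ) = 2 * i}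
      {v : V | (C v : ℕ) = 2 * i + 1} (hclass _) (hclass _)
    refine ⟨S, hind, fun v hv hvS => hdom v ?_ hvS⟩
    rcases hv with h | h
    · exact Or.inl h
    · exact Or.inr h
  choose S hSind hSdom using hS
  -- total dominating set
  let T : Finset V := (Finset.range m).biUnion fun i => (S i).toFinset
  have hTdom : IsDirDomSet o (↑T : Set V) := by
    intro v hv
    have hcv : (C v : ℕ) < k := (C v).2
    set i := (C v : ℕ) / 2 with hi
    have him : i < m := by
      have : (C v : ℕ) / 2 ≤ (k - 1) / 2 := Nat.div_le_div_right (Nat.le_pred_of_lt hcv)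
      calc i ≤ (k - 1) / 2 := this
        _ < (k + 1) / 2 := by omega
    have hcase : (C v : ℕ) = 2 * i ∨ (C v : ℕ) = 2 * i + 1 := by omega
    have hvS : v ∉ S i := by
      intro h
      exact hv (Finset.mem_coe.mpr (Finset.mem_biUnion.mpr
        ⟨i, Finset.mem_range.mpr him, Set.mem_toFinset.mpr h⟩))
    obtain ⟨u, hu, huo⟩ := hSdom i v hcase hvS
    exact ⟨u, Finset.mem_coe.mpr (Finset.mem_biUnion.mpr
      ⟨i, Finset.mem_range.mpr him, Set.mem_toFinset.mpr hu⟩), huo⟩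
  have hTcard : T.card ≤ indepNum G * m := by
    calc T.card ≤ ∑ i ∈ Finset.range m, (S i).toFinset.card := Finset.card_biUnion_le
      _ ≤ ∑ _i ∈ Finset.range m, indepNum G := by
          refine Finset.sum_le_sum fun i _ => ?_
          refine indep_card_le G (S i).toFinset fun u hu w hw _ => ?_
          exact hSind i u (Set.mem_toFinset.mp hu) w (Set.mem_toFinset.mp hw)
      _ = m * indepNum G := by rw [Finset.sum_const, Finset.card_range, smul_eq_mul]
      _ = indepNum G * m := Nat.mul_comm _ _
  exact le_trans (Nat.sInf_le ⟨T, rfl, hTdom⟩) hTcard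

theorem stmt12 {V : Type*} [Fintype V] (G : SimpleGraph V) :
    GammaD G ≤ indepNum G * ((G.chromaticNumber.toNat + 1) / 2) := by
  classical
  apply csSup_le
  · -- nonempty: some orientation exists
    let e := (Fintype.equivFin V)
    refine ⟨dirDomNum V (fun u v => G.Adj u v ∧ e u < e v), fun u v => G.Adj u v ∧ e u < e v,
      ⟨fun u v h => h.1, fun u v h => ?_, fun u v h h' => ?_⟩, rfl⟩
    · rcases lt_or_gt_of_ne (fun he => G.ne_of_adj h (e.injective he)) with hlt | hgt
      · exact Or.inl ⟨h, hlt⟩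
      · exact Or.inr ⟨h.symm, hgt⟩
    · exact absurd h'.2 (not_lt.mpr (le_of_lt h.2))
  · rintro n ⟨o, ho, rfl⟩
    exact key_bound G ho
end

section
/- If G is a graph of order n, then Γ_d(G) ≤ n − ⌊χ(G)/2⌋. -/
/-!
A maximal matching `M` leaves the unmatched vertices independent, so giving every matched vertex
its own color and all others one extra color shows `χ(G) ≤ |V(M)| + 1`, i.e. `⌊χ(G)/2⌋ ≤ |M|`.
In any orientation, deleting the head of every edge of `M` leaves a directed dominating set: each
deleted head is dominated by its partner in `M`, which is not itself a head because `M` is a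
matching and no edge is oriented both ways.
-/

namespace SimpleGraph

variable {V : Type*} {G : SimpleGraph V}

lemma exists_isMatching_isIndepSet_compl_verts [Finite V] :
    ∃ M : G.Subgraph, M.IsMatching ∧ G.IsIndepSet M.vertsᶜ := by
  obtain ⟨M, -, hM⟩ :=
    Finite.exists_le_maximal (p := Subgraph.IsMatching) (a := (⊥ : G.Subgraph)) fun _ hv => hv.elim
  refine ⟨M, hM.prop, fun u hu v hv _ huv => hu ?_⟩
  have huv_disj : Disjoint M.support (G.subgraphOfAdj huv).support := by
    rw [hM.prop.support_eq_verts, (Subgraph.IsMatching.subgraphOfAdj huv).support_eq_verts,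
      subgraphOfAdj_verts, Set.disjoint_insert_right, Set.disjoint_singleton_right]
    exact ⟨hu, hv⟩
  have hle := hM.2 (hM.prop.sup (.subgraphOfAdj huv) huv_disj) le_sup_left
  exact hle.1 (Or.inr (Set.mem_insert u _))

lemma colorable_ncard_add_one_of_isIndepSet_compl {s : Set V} (hs : s.Finite)
    (h : G.IsIndepSet sᶜ) : G.Colorable (s.ncard + 1) := by
  classical
  have := hs.fintype
  let C : G.Coloring (Option s) :=
    Coloring.mk (fun v => if hv : v ∈ s then some ⟨v, hv⟩ else none) fun {u v} huv => by
      by_cases hu : u ∈ s <;> by_cases hv : v ∈ s <;> simp [hu, hv, huv.ne]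
      exact h hu hv huv.ne huv
  simpa [Set.fintypeCard_eq_ncard] using C.colorable

end SimpleGraph

lemma dirDomNum_le_ncard {V : Type*} [Fintype V] {o : V → V → Prop} {S : Set V}
    (h : IsDirDomSet o S) : dirDomNum V o ≤ S.ncard := by
  classical
  exact Nat.sInf_le ⟨S.toFinset, (Set.ncard_eq_toFinset_card' S).symm, by simpa using h⟩

namespace SimpleGraph.Subgraph

variable {V : Type*} {G : SimpleGraph V} {M : G.Subgraph} {o : V → V → Prop}

def heads (M : G.Subgraph) (o : V → V → Prop) : Set V := {v | ∃ w, M.Adj w v ∧ o w v}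

lemma IsMatching.isDirDomSet_compl_heads (hM : M.IsMatching)
    (hasymm : ∀ u v, o u v → ¬ o v u) : IsDirDomSet o (M.heads o)ᶜ := by
  intro v hv
  obtain ⟨w, hwv, hwv_o⟩ := not_not.mp hv
  refine ⟨w, fun ⟨u, huw, huw_o⟩ => ?_, hwv_o⟩
  obtain rfl := hM.eq_of_adj_right huw hwv.symm
  exact hasymm _ _ hwv_o huw_o

lemma IsMatching.ncard_verts_le_two_mul_ncard_heads [Finite V] (hM : M.IsMatching)
    (ho : IsOrientation G o) : M.verts.ncard ≤ 2 * (M.heads o).ncard := by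
  classical
  have := Fintype.ofFinite V
  set tails := {w | ∃ v, M.Adj w v ∧ o w v}
  have hverts : M.verts ⊆ M.heads o ∪ tails := fun v hv => by
    obtain ⟨w, hvw, -⟩ := hM hv
    rcases ho.2.1 v w (M.adj_sub hvw) with hvw_o | hwv_o
    · exact Or.inr ⟨w, hvw, hvw_o⟩
    · exact Or.inl ⟨w, hvw.symm, hwv_o⟩
  have htails : tails.ncard ≤ (M.heads o).ncard := by
    simp only [Set.ncard_eq_toFinset_card']
    refine Finset.card_le_card_of_forall_subsingleton M.Adj (fun w hw => ?_)
      fun v _ u₁ hu₁ u₂ hu₂ => ?_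
    · obtain ⟨v, hwv, hwv_o⟩ := Set.mem_toFinset.mp hw
      exact ⟨v, Set.mem_toFinset.mpr ⟨w, hwv, hwv_o⟩, hwv⟩
    · exact hM.eq_of_adj_right hu₁.2 hu₂.2
  calc M.verts.ncard ≤ (M.heads o ∪ tails).ncard := Set.ncard_le_ncard hverts
    _ ≤ (M.heads o).ncard + tails.ncard := Set.ncard_union_le _ _
    _ ≤ 2 * (M.heads o).ncard := by omega

lemma IsMatching.dirDomNum_le_card_sub [Fintype V] (hM : M.IsMatching) (ho : IsOrientation G o) :
    dirDomNum V o ≤ Fintype.card V - M.verts.ncard / 2 := by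
  have hdom := dirDomNum_le_ncard (hM.isDirDomSet_compl_heads ho.2.2)
  have hcard := hM.ncard_verts_le_two_mul_ncard_heads ho
  rw [Set.ncard_compl, Nat.card_eq_fintype_card] at hdom
  omega

end SimpleGraph.Subgraph

theorem stmt13 {V : Type*} [Fintype V] (G : SimpleGraph V) :
    GammaD G ≤ Fintype.card V - G.chromaticNumber.toNat / 2 := by
  classical
  obtain ⟨M, hM, hindep⟩ := G.exists_isMatching_isIndepSet_compl_verts
  have hχ : G.chromaticNumber.toNat ≤ M.verts.ncard + 1 :=
    ENat.toNat_le_of_le_natCast <|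
      (SimpleGraph.colorable_ncard_add_one_of_isIndepSet_compl M.verts.toFinite hindep)
        |>.chromaticNumber_le
  have heven : Even M.verts.ncard := Set.ncard_eq_toFinset_card' M.verts ▸ hM.even_card
  refine csSup_le' ?_
  rintro _ ⟨o, ho, rfl⟩
  have := hM.dirDomNum_le_card_sub ho
  rcases heven with ⟨k, hk⟩
  omega
end
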